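/- arXiv:math/0505293 — 4 statements merged into one kernel-verified Lean document; each statement's English description precedes it below -/
import Mathlib

section
/- In the commutative differential ring (ℂ[t], d/dt) with vertex operator Y(f,x)g = f(t+x)·g(t), the element t⊗1⊗(x₁−x₂)⁻¹ − 1⊗t⊗(x₁−x₂)⁻¹ − 1⊗1⊗1 lies in the kernel of the map Z₂; concretely, (x₁−x₂)⁻¹(t+x₁)·1 − (x₁−x₂)⁻¹(t+x₂)·1 − 1 = 0 in ℂ[t]((x₁))((x₂)). Hence the vertex algebra (ℂ[t], d/dt) is degenerate. -/
/-! Viewed as a Laurent series in `x₂` over `ℂ[t]((x₁))`, `x₁ - x₂ = C x₁ - x₂` is a unit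
constant term minus a term of positive order, so it is invertible by the geometric series.
For any inverse `g`, the difference `g·(t+x₁) - g·(t+x₂)` is `g·(x₁ - x₂) = 1`. -/

noncomputable section

/-- The iterated Laurent series ring `ℂ[t]((x₁))((x₂))`. -/
abbrev LL : Type := LaurentSeries (LaurentSeries (Polynomial ℂ))

/-- The inner variable `x₁` of `ℂ[t]((x₁))((x₂))`. -/
def x₁ : LL := HahnSeries.C (HahnSeries.single (1 : ℤ) (1 : Polynomial ℂ))

/-- The outer variable `x₂` of `ℂ[t]((x₁))((x₂))`. -/
def x₂ : LL := HahnSeries.single (1 : ℤ) (1 : LaurentSeries (Polynomial ℂ))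

/-- The variable `t` of `ℂ[t]` viewed in `ℂ[t]((x₁))((x₂))`. -/
def tt : LL := HahnSeries.C (HahnSeries.C (Polynomial.X : Polynomial ℂ))

namespace HahnSeries

variable {Γ R : Type*} [AddCommGroup Γ] [LinearOrder Γ] [IsOrderedAddMonoid Γ] [CommRing R]

theorem isUnit_single_of_isUnit {r : R} (hr : IsUnit r) (γ : Γ) : IsUnit (single γ r) := by
  obtain ⟨u, rfl⟩ := hr
  refine .of_mul_eq_one (single (-γ) (↑u⁻¹ : R)) ?_
  rw [single_mul_single, add_neg_cancel, Units.mul_inv, single_zero_one]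

theorem isUnit_C_sub_single {a : R} (ha : IsUnit a) {γ : Γ} (hγ : 0 < γ) (b : R) :
    IsUnit (C a - single γ b) := by
  obtain ⟨u, rfl⟩ := ha
  have hfactor : C (u : R) - single γ b = C (u : R) * (1 - single γ (↑u⁻¹ * b)) := by
    rw [mul_sub, mul_one, C_apply, single_mul_single, zero_add, Units.mul_inv_cancel_left]
  rw [hfactor]
  refine (u.isUnit.map C).mul (isUnit_of_orderTop_pos ?_)
  rw [sub_sub_cancel_left, orderTop_neg]
  exact (WithTop.coe_lt_coe.2 hγ).trans_le orderTop_single_le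

end HahnSeries

theorem isUnit_x₁_sub_x₂ : IsUnit (x₁ - x₂) :=
  HahnSeries.isUnit_C_sub_single (HahnSeries.isUnit_single_of_isUnit isUnit_one 1) one_pos 1

/-- In the vertex algebra `(ℂ[t], d/dt)`, with `Y(f,x)g = f(t+x)g`, the element
`t ⊗ 1 ⊗ (x₁-x₂)⁻¹ - 1 ⊗ t ⊗ (x₁-x₂)⁻¹ - 1 ⊗ 1 ⊗ 1` lies in the kernel of `Z₂`:
concretely, `(x₁-x₂)` is invertible in `ℂ[t]((x₁))((x₂))` and for any inverse `g` we have
`g·(t+x₁) - g·(t+x₂) - 1 = 0` in `ℂ[t]((x₁))((x₂))`.  Hence `Z₂` is not injective and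
the vertex algebra `(ℂ[t], d/dt)` is degenerate. -/
theorem stmt1 :
    (∃ g : LL, g * (x₁ - x₂) = 1) ∧
    ∀ g : LL, g * (x₁ - x₂) = 1 →
      g * (tt + x₁) - g * (tt + x₂) - 1 = 0 :=
  ⟨isUnit_x₁_sub_x₂.exists_left_inv, fun g hg => by rw [← hg]; ring⟩
end
end

section
/- Let A be a unital associative ℂ-algebra and ∂ a derivation of A. Define Y(a,x)b = (e^{x∂}a)b := Σ_{n≥0} (∂ⁿa)b xⁿ/n!. Then Y(1,x)b = b, Y(a,x)1 ∈ A[[x]] with constant term a, and the weak associativity Y(a,x+y)Y(b,y)c = Y(Y(a,x)b,y)c holds (as identities in A[[x,y]]). -/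
/-!
The coefficient of `xⁿ yᵐ / (n! m!)` in `(e^{(x+y)D} a) (e^{yD} b) c` is
`∑ᵢ C(m,i) D^{n+i} a · D^{m-i} b · c`, so weak associativity is the general Leibniz rule for
`Dᵐ` applied to `Dⁿ a · b`. The unit property holds because a
derivation kills `1`.
-/

open Finset

namespace Module.End

section Leibniz

variable {R A : Type*} [Semiring R] [Semiring A] [Module R A]

theorem pow_apply_mul_of_leibniz (D : Module.End R A)
    (hD : ∀ a b : A, D (a * b) = D a * b + a * D b) (u v : A) (m : ℕ) :
    (D ^ m) (u * v) = ∑ i ∈ range (m + 1), m.choose i • ((D ^ i) u * (D ^ (m - i)) v) := by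
  induction m with
  | zero => simp
  | succ m ih =>
    rw [pow_succ', mul_apply, ih, map_sum,
      sum_choose_succ_nsmul (fun i j => (D ^ i) u * (D ^ j) v) m, ← sum_add_distrib]
    refine sum_congr rfl fun i hi => ?_
    have hsub : m - i + 1 = m + 1 - i := by have := mem_range.1 hi; omega
    rw [map_nsmul, hD, smul_add, add_comm, ← mul_apply D (D ^ i), ← mul_apply D (D ^ (m - i)),
      ← pow_succ', ← pow_succ', hsub]

end Leibniz

variable {R A : Type*} [Semiring R] [Ring A] [Module R A]

theorem apply_one_eq_zero_of_leibniz (D : Module.End R A)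
    (hD : ∀ a b : A, D (a * b) = D a * b + a * D b) : D 1 = 0 := by
  simpa using hD 1 1

theorem pow_apply_one_eq_zero_of_leibniz (D : Module.End R A)
    (hD : ∀ a b : A, D (a * b) = D a * b + a * D b) {n : ℕ} (hn : n ≠ 0) :
    (D ^ n) 1 = 0 := by
  obtain ⟨k, rfl⟩ := Nat.exists_eq_succ_of_ne_zero hn
  rw [pow_succ, mul_apply, apply_one_eq_zero_of_leibniz D hD, map_zero]

end Module.End

open Module.End

/-- Let `A` be a unital associative `ℂ`-algebra and `D` a derivation of `A`.
Define `Y(a,x)b = (e^{xD}a)b = ∑_{n≥0} (Dⁿa)b xⁿ/n!`.  Then: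
(1) `Y(1,x)b = b`;
(2) `Y(a,x)1 ∈ A[[x]]` has constant term `a`;
(3) the weak associativity `Y(a,x+y)Y(b,y)c = Y(Y(a,x)b,y)c` holds in `A[[x,y]]`, i.e.
coefficientwise (after clearing the factorials `n! m!`):
`∑_{i=0}^{m} C(m,i) D^{n+i}a · (D^{m-i}b · c) = D^m(Dⁿa · b) · c`. -/
theorem stmt2 (A : Type*) [Ring A] [Algebra ℂ A]
    (D : A →ₗ[ℂ] A) (hD : ∀ a b : A, D (a * b) = D a * b + a * D b) :
    (∀ b : A,
      (PowerSeries.mk fun n => ((n.factorial : ℂ)⁻¹) • ((D ^ n) (1 : A) * b)) =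
        PowerSeries.C (R := A) b) ∧
    (∀ a : A,
      (PowerSeries.coeff (R := A) 0)
        (PowerSeries.mk fun n => ((n.factorial : ℂ)⁻¹) • ((D ^ n) a * 1)) = a) ∧
    (∀ a b c : A, ∀ n m : ℕ,
      (∑ i ∈ Finset.range (m + 1),
        (m.choose i : ℤ) • ((D ^ (n + i)) a * ((D ^ (m - i)) b * c))) =
      (D ^ m) ((D ^ n) a * b) * c) := by
  refine ⟨fun b => ?_, fun a => by simp, fun a b c n m => ?_⟩
  · ext n
    rcases eq_or_ne n 0 with rfl | hn
    · simp
    · simp [PowerSeries.coeff_C, hn, pow_apply_one_eq_zero_of_leibniz D hD hn]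
  · rw [pow_apply_mul_of_leibniz D hD, sum_mul]
    refine sum_congr rfl fun i _ => ?_
    rw [natCast_zsmul, smul_mul_assoc, mul_assoc, add_comm, pow_add, mul_apply]
end

section
/- Let g be a Lie algebra over ℂ. Define S(x) : (g⊕ℂ)⊗(g⊕ℂ) → (g⊕ℂ)⊗(g⊕ℂ)⊗ℂ((x)) by S(x)(1⊗1)=1⊗1, S(x)(1⊗a)=1⊗a, S(x)(a⊗1)=a⊗1, and S(x)(a⊗b) = a⊗b + x⁻¹(1⊗[a,b] − [a,b]⊗1) for a,b ∈ g. Then S satisfies the unitarity condition S₂₁(−x)S(x) = 1 and the quantum Yang–Baxter equation S₁₂(x)S₁₃(x+z)S₂₃(z) = S₂₃(z)S₁₃(x+z)S₁₂(x). -/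
/-!
Write `S(x) = 1 + x⁻¹ T`. The map `T` takes values in `1 ⊗ g + g ⊗ 1`, which it kills, so
`T² = 0`; and `T` commutes with the flip by antisymmetry of the bracket. Hence
`S₂₁(-x) S(x) = (1 - x⁻¹ T)(1 + x⁻¹ T) = 1`.

For the Yang–Baxter equation put `a = x⁻¹`, `b = (x + z)⁻¹`, `c = z⁻¹`. Every product
`T_{ij} T_{kl}` takes values in tensors with a single factor from `g`, which every `T_{ij}` kills,
so the cubic terms vanish and the two sides differ by `ab[T₁₂, T₁₃] + ac[T₁₂, T₂₃] + bc[T₁₃, T₂₃]`.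
Since `ac = ab + bc` this equals `ab[T₁₂, T₁₃ + T₂₃] + bc[T₁₂ + T₁₃, T₂₃]`, and both commutators
vanish by the Jacobi identity.
-/

set_option synthInstance.maxHeartbeats 1000000
set_option maxHeartbeats 1000000

noncomputable section

open TensorProduct

variable (g : Type) [LieRing g] [LieAlgebra ℂ g]

/-- `U = g ⊕ ℂ`, with distinguished vector `1 = (0,1)`. -/
abbrev Ue (g : Type) [LieRing g] [LieAlgebra ℂ g] : Type := g × ℂ

/-- The bracket of `g` as a bilinear map. -/
def brMap : g →ₗ[ℂ] g →ₗ[ℂ] g :=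
  LinearMap.mk₂ ℂ (fun a b => ⁅a, b⁆) add_lie smul_lie lie_add lie_smul

/-- The linear map `g → U ⊗ U`, `c ↦ 1 ⊗ c - c ⊗ 1` (where `c ∈ g ⊆ U`, `1 = (0,1)`). -/
def eMap : g →ₗ[ℂ] Ue g ⊗[ℂ] Ue g :=
  ((TensorProduct.mk ℂ (Ue g) (Ue g) ((0 : g), (1 : ℂ))).comp (LinearMap.inl ℂ g ℂ)) -
    (((TensorProduct.mk ℂ (Ue g) (Ue g)).flip ((0 : g), (1 : ℂ))).comp (LinearMap.inl ℂ g ℂ))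

/-- The linear map `T : U ⊗ U → U ⊗ U` with `T(u ⊗ v) = 1 ⊗ [u,v] - [u,v] ⊗ 1`
(`u, v` taken mod `ℂ1`), so that `S(x) = id + x⁻¹ T`. -/
def Tmap : Ue g ⊗[ℂ] Ue g →ₗ[ℂ] Ue g ⊗[ℂ] Ue g :=
  TensorProduct.lift
    (((brMap g).compl₁₂ (LinearMap.fst ℂ g ℂ) (LinearMap.fst ℂ g ℂ)).compr₂ (eMap g))

/-- The field `ℂ(x, z)` of rational functions in the two variables `x = X 0`, `z = X 1`. -/
abbrev KK : Type := FractionRing (MvPolynomial (Fin 2) ℂ)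

/-- The rational `S`-operator `S(c) = id + c⁻¹ T` on `K ⊗ (U ⊗ U)`. -/
def Sop (c : KK) : KK ⊗[ℂ] (Ue g ⊗[ℂ] Ue g) →ₗ[KK] KK ⊗[ℂ] (Ue g ⊗[ℂ] Ue g) :=
  LinearMap.id + c⁻¹ • (Tmap g).baseChange KK

/-- `S₂₁(c) = σ ∘ S(c) ∘ σ` where `σ` swaps the tensor factors. -/
def S21op (c : KK) : KK ⊗[ℂ] (Ue g ⊗[ℂ] Ue g) →ₗ[KK] KK ⊗[ℂ] (Ue g ⊗[ℂ] Ue g) :=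
  LinearMap.id + c⁻¹ •
    ((TensorProduct.comm ℂ (Ue g) (Ue g)).toLinearMap ∘ₗ Tmap g ∘ₗ
      (TensorProduct.comm ℂ (Ue g) (Ue g)).toLinearMap).baseChange KK

/-- `T` acting on the factors (1,2) of `U ⊗ U ⊗ U = U ⊗ (U ⊗ U)`. -/
def T12 : Ue g ⊗[ℂ] (Ue g ⊗[ℂ] Ue g) →ₗ[ℂ] Ue g ⊗[ℂ] (Ue g ⊗[ℂ] Ue g) :=
  (TensorProduct.assoc ℂ (Ue g) (Ue g) (Ue g)).toLinearMap ∘ₗ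
    (Tmap g).rTensor (Ue g) ∘ₗ
      (TensorProduct.assoc ℂ (Ue g) (Ue g) (Ue g)).symm.toLinearMap

/-- `T` acting on the factors (2,3). -/
def T23 : Ue g ⊗[ℂ] (Ue g ⊗[ℂ] Ue g) →ₗ[ℂ] Ue g ⊗[ℂ] (Ue g ⊗[ℂ] Ue g) :=
  (Tmap g).lTensor (Ue g)

/-- The permutation of `U ⊗ U ⊗ U` swapping factors 2 and 3. -/
def P23 : Ue g ⊗[ℂ] (Ue g ⊗[ℂ] Ue g) →ₗ[ℂ] Ue g ⊗[ℂ] (Ue g ⊗[ℂ] Ue g) :=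
  (TensorProduct.comm ℂ (Ue g) (Ue g)).toLinearMap.lTensor (Ue g)

/-- `T` acting on the factors (1,3). -/
def T13 : Ue g ⊗[ℂ] (Ue g ⊗[ℂ] Ue g) →ₗ[ℂ] Ue g ⊗[ℂ] (Ue g ⊗[ℂ] Ue g) :=
  P23 g ∘ₗ T12 g ∘ₗ P23 g

/-- `S_{ij}(c) = id + c⁻¹ T_{ij}` on `K ⊗ (U ⊗ U ⊗ U)`, extended `K`-linearly. -/
def Sij (T : Ue g ⊗[ℂ] (Ue g ⊗[ℂ] Ue g) →ₗ[ℂ] Ue g ⊗[ℂ] (Ue g ⊗[ℂ] Ue g)) (c : KK) :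
    KK ⊗[ℂ] (Ue g ⊗[ℂ] (Ue g ⊗[ℂ] Ue g)) →ₗ[KK] KK ⊗[ℂ] (Ue g ⊗[ℂ] (Ue g ⊗[ℂ] Ue g)) :=
  LinearMap.id + c⁻¹ • T.baseChange KK

/-- The variable `x` of `ℂ(x,z)`. -/
def xv : KK := algebraMap (MvPolynomial (Fin 2) ℂ) KK (MvPolynomial.X 0)

/-- The variable `z` of `ℂ(x,z)`. -/
def zv : KK := algebraMap (MvPolynomial (Fin 2) ℂ) KK (MvPolynomial.X 1)

section EndomorphismAlgebra

variable {K R : Type*} [Field K] [Ring R] [Algebra K R]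

theorem one_add_neg_smul_mul_one_add_smul {T : R} (hT : T * T = 0) (a : K) :
    (1 + (-a) • T) * (1 + a • T) = 1 := by
  rw [add_mul, mul_add, mul_add, smul_mul_smul_comm, hT, smul_zero, add_zero]
  simp only [one_mul, mul_one, neg_smul, add_neg_cancel_right]

theorem yangBaxter_of_commute {A B C : R} {x z : K} (hx : x ≠ 0) (hz : z ≠ 0)
    (hxz : x + z ≠ 0) (hA : Commute A (B + C)) (hC : Commute (A + B) C)
    (hABC : A * B * C = 0) (hCBA : C * B * A = 0) :
    (1 + x⁻¹ • A) * (1 + (x + z)⁻¹ • B) * (1 + z⁻¹ • C) =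
      (1 + z⁻¹ • C) * (1 + (x + z)⁻¹ • B) * (1 + x⁻¹ • A) := by
  have hcoef : x⁻¹ * z⁻¹ = x⁻¹ * (x + z)⁻¹ + (x + z)⁻¹ * z⁻¹ := by
    field_simp
    ring
  rw [← sub_eq_zero]
  calc _ = (x⁻¹ * (x + z)⁻¹) • (A * (B + C) - (B + C) * A) +
        ((x + z)⁻¹ * z⁻¹) • ((A + B) * C - C * (A + B)) := by
          simp only [add_mul, mul_add, one_mul, mul_one, smul_mul_assoc, mul_smul_comm,
            hABC, hCBA, smul_zero, add_zero]
          linear_combination (norm := module) hcoef • (A * C - C * A)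
    _ = 0 := by rw [hA.eq, hC.eq, sub_self, sub_self, smul_zero, smul_zero, add_zero]

end EndomorphismAlgebra

abbrev U3 : Type := Ue g ⊗[ℂ] (Ue g ⊗[ℂ] Ue g)

abbrev oneU : Ue g := (0, 1)

theorem eMap_apply (c : g) : eMap g c = oneU g ⊗ₜ (c, 0) - (c, 0) ⊗ₜ oneU g := by
  simp [eMap]

theorem Tmap_tmul (u v : Ue g) : Tmap g (u ⊗ₜ v) = eMap g ⁅u.1, v.1⁆ := by
  simp [Tmap, brMap]

theorem Tmap_eMap (c : g) : Tmap g (eMap g c) = 0 := by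
  simp [eMap_apply, Tmap_tmul]

theorem Tmap_mul_self : Tmap g * Tmap g = 0 :=
  TensorProduct.ext' fun u v => by simp [Tmap_tmul, Tmap_eMap]

theorem comm_eMap (c : g) : TensorProduct.comm ℂ (Ue g) (Ue g) (eMap g c) = -eMap g c := by
  simp [eMap_apply]

theorem comm_comp_Tmap_comp_comm :
    (TensorProduct.comm ℂ (Ue g) (Ue g)).toLinearMap ∘ₗ Tmap g ∘ₗ
      (TensorProduct.comm ℂ (Ue g) (Ue g)).toLinearMap = Tmap g :=
  TensorProduct.ext' fun u v => by
    simp only [LinearMap.coe_comp, LinearEquiv.coe_coe, Function.comp_apply, comm_tmul,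
      Tmap_tmul, comm_eMap, ← map_neg, lie_skew]

theorem S21op_neg_comp_Sop (c : KK) : S21op g (-c) ∘ₗ Sop g c = LinearMap.id := by
  rw [S21op, comm_comp_Tmap_comp_comm, inv_neg (a := c)]
  refine one_add_neg_smul_mul_one_add_smul
    (R := Module.End KK (KK ⊗[ℂ] (Ue g ⊗[ℂ] Ue g))) ?_ c⁻¹
  rw [← LinearMap.baseChange_mul, Tmap_mul_self, LinearMap.baseChange_zero]

def slot₁ : g →ₗ[ℂ] U3 g :=
  (TensorProduct.mk ℂ (Ue g) (Ue g ⊗[ℂ] Ue g)).flip (oneU g ⊗ₜ oneU g) ∘ₗ LinearMap.inl ℂ g ℂ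

def slot₂ : g →ₗ[ℂ] U3 g :=
  TensorProduct.mk ℂ (Ue g) (Ue g ⊗[ℂ] Ue g) (oneU g) ∘ₗ
    (TensorProduct.mk ℂ (Ue g) (Ue g)).flip (oneU g) ∘ₗ LinearMap.inl ℂ g ℂ

def slot₃ : g →ₗ[ℂ] U3 g :=
  TensorProduct.mk ℂ (Ue g) (Ue g ⊗[ℂ] Ue g) (oneU g) ∘ₗ
    TensorProduct.mk ℂ (Ue g) (Ue g) (oneU g) ∘ₗ LinearMap.inl ℂ g ℂ

theorem slot₁_apply (c : g) : slot₁ g c = (c, 0) ⊗ₜ (oneU g ⊗ₜ oneU g) := rfl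

theorem slot₂_apply (c : g) : slot₂ g c = oneU g ⊗ₜ ((c, 0) ⊗ₜ oneU g) := rfl

theorem slot₃_apply (c : g) : slot₃ g c = oneU g ⊗ₜ (oneU g ⊗ₜ (c, 0)) := rfl

theorem T12_tmul (u v w : Ue g) : T12 g (u ⊗ₜ (v ⊗ₜ w)) =
    oneU g ⊗ₜ ((⁅u.1, v.1⁆, 0) ⊗ₜ w) - (⁅u.1, v.1⁆, 0) ⊗ₜ (oneU g ⊗ₜ w) := by
  simp [T12, Tmap_tmul, eMap_apply, sub_tmul]

theorem T23_tmul (u v w : Ue g) : T23 g (u ⊗ₜ (v ⊗ₜ w)) =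
    u ⊗ₜ (oneU g ⊗ₜ (⁅v.1, w.1⁆, 0)) - u ⊗ₜ ((⁅v.1, w.1⁆, 0) ⊗ₜ oneU g) := by
  simp [T23, Tmap_tmul, eMap_apply, tmul_sub]

theorem T13_tmul (u v w : Ue g) : T13 g (u ⊗ₜ (v ⊗ₜ w)) =
    oneU g ⊗ₜ (v ⊗ₜ (⁅u.1, w.1⁆, 0)) - (⁅u.1, w.1⁆, 0) ⊗ₜ (v ⊗ₜ oneU g) := by
  simp [T13, P23, T12_tmul]

theorem T12_slot₁ (c : g) : T12 g (slot₁ g c) = 0 := by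
  simp [slot₁_apply, T12_tmul, Prod.mk_zero_zero]

theorem T12_slot₃ (c : g) : T12 g (slot₃ g c) = 0 := by
  simp [slot₃_apply, T12_tmul, Prod.mk_zero_zero]

theorem T23_slot₁ (c : g) : T23 g (slot₁ g c) = 0 := by
  simp [slot₁_apply, T23_tmul, Prod.mk_zero_zero]

theorem T23_slot₃ (c : g) : T23 g (slot₃ g c) = 0 := by
  simp [slot₃_apply, T23_tmul, Prod.mk_zero_zero]

theorem T12_T13_tmul (u v w : Ue g) : T12 g (T13 g (u ⊗ₜ (v ⊗ₜ w))) =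
    slot₁ g ⁅⁅u.1, w.1⁆, v.1⁆ - slot₂ g ⁅⁅u.1, w.1⁆, v.1⁆ := by
  simp [T13_tmul, T12_tmul, slot₁_apply, slot₂_apply, Prod.mk_zero_zero, -lie_lie]

theorem T13_T12_tmul (u v w : Ue g) : T13 g (T12 g (u ⊗ₜ (v ⊗ₜ w))) =
    slot₁ g ⁅⁅u.1, v.1⁆, w.1⁆ - slot₃ g ⁅⁅u.1, v.1⁆, w.1⁆ := by
  simp [T13_tmul, T12_tmul, slot₁_apply, slot₃_apply, Prod.mk_zero_zero, -lie_lie]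

theorem T12_T23_tmul (u v w : Ue g) : T12 g (T23 g (u ⊗ₜ (v ⊗ₜ w))) =
    slot₁ g ⁅u.1, ⁅v.1, w.1⁆⁆ - slot₂ g ⁅u.1, ⁅v.1, w.1⁆⁆ := by
  simp [T23_tmul, T12_tmul, slot₁_apply, slot₂_apply, Prod.mk_zero_zero, -lie_lie]

theorem T23_T12_tmul (u v w : Ue g) : T23 g (T12 g (u ⊗ₜ (v ⊗ₜ w))) =
    slot₃ g ⁅⁅u.1, v.1⁆, w.1⁆ - slot₂ g ⁅⁅u.1, v.1⁆, w.1⁆ := by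
  simp [T23_tmul, T12_tmul, slot₂_apply, slot₃_apply, Prod.mk_zero_zero, -lie_lie]

theorem T13_T23_tmul (u v w : Ue g) : T13 g (T23 g (u ⊗ₜ (v ⊗ₜ w))) =
    slot₃ g ⁅u.1, ⁅v.1, w.1⁆⁆ - slot₁ g ⁅u.1, ⁅v.1, w.1⁆⁆ := by
  simp [T23_tmul, T13_tmul, slot₁_apply, slot₃_apply, Prod.mk_zero_zero, -lie_lie]

theorem T23_T13_tmul (u v w : Ue g) : T23 g (T13 g (u ⊗ₜ (v ⊗ₜ w))) =
    slot₃ g ⁅v.1, ⁅u.1, w.1⁆⁆ - slot₂ g ⁅v.1, ⁅u.1, w.1⁆⁆ := by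
  simp [T13_tmul, T23_tmul, slot₂_apply, slot₃_apply, Prod.mk_zero_zero, -lie_lie]

theorem commute_T12_T13_add_T23 : Commute (T12 g) (T13 g + T23 g) := by
  refine TensorProduct.ext_threefold' fun u v w => ?_
  have jacobi : ⁅⁅u.1, w.1⁆, v.1⁆ + ⁅u.1, ⁅v.1, w.1⁆⁆ = ⁅⁅u.1, v.1⁆, w.1⁆ := by
    rw [leibniz_lie, ← lie_skew v.1]
    abel
  simp only [mul_add, add_mul, LinearMap.add_apply, Module.End.mul_apply, T12_T13_tmul,
    T12_T23_tmul, T13_T12_tmul, T23_T12_tmul, ← jacobi, map_add]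
  abel

theorem commute_T12_add_T13_T23 : Commute (T12 g + T13 g) (T23 g) := by
  refine TensorProduct.ext_threefold' fun u v w => ?_
  simp only [mul_add, add_mul, LinearMap.add_apply, Module.End.mul_apply, T12_T23_tmul,
    T13_T23_tmul, T23_T12_tmul, T23_T13_tmul, leibniz_lie u.1 v.1 w.1, map_add]
  abel

theorem T12_mul_T13_mul_T23 : T12 g * T13 g * T23 g = 0 :=
  TensorProduct.ext_threefold' fun u v w => by
    simp only [Module.End.mul_apply, T13_T23_tmul, map_sub, T12_slot₁, T12_slot₃, sub_zero,
      LinearMap.zero_apply]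

theorem T23_mul_T13_mul_T12 : T23 g * T13 g * T12 g = 0 :=
  TensorProduct.ext_threefold' fun u v w => by
    simp only [Module.End.mul_apply, T13_T12_tmul, map_sub, T23_slot₁, T23_slot₃, sub_zero,
      LinearMap.zero_apply]

theorem Sij_eq (T : Module.End ℂ (U3 g)) (c : KK) :
    Sij g T c = 1 + c⁻¹ • Module.End.baseChangeHom ℂ KK (U3 g) T :=
  rfl

theorem Sij_yangBaxter {x z : KK} (hx : x ≠ 0) (hz : z ≠ 0) (hxz : x + z ≠ 0) :
    Sij g (T12 g) x ∘ₗ Sij g (T13 g) (x + z) ∘ₗ Sij g (T23 g) z =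
      Sij g (T23 g) z ∘ₗ Sij g (T13 g) (x + z) ∘ₗ Sij g (T12 g) x := by
  let φ := Module.End.baseChangeHom ℂ KK (U3 g)
  have key := yangBaxter_of_commute (A := φ (T12 g)) (B := φ (T13 g)) (C := φ (T23 g))
    hx hz hxz
    (by simpa only [map_add] using (commute_T12_T13_add_T23 g).map φ)
    (by simpa only [map_add] using (commute_T12_add_T13_T23 g).map φ)
    (by rw [← map_mul, ← map_mul, T12_mul_T13_mul_T23, map_zero])
    (by rw [← map_mul, ← map_mul, T23_mul_T13_mul_T12, map_zero])
  simp only [Sij_eq, ← Module.End.mul_eq_comp, ← mul_assoc]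
  exact key

theorem algebraMap_mvPolynomial_ne_zero {p : MvPolynomial (Fin 2) ℂ} (hp : p ≠ 0) :
    algebraMap (MvPolynomial (Fin 2) ℂ) KK p ≠ 0 :=
  (map_ne_zero_iff _ (IsFractionRing.injective _ _)).mpr hp

theorem xv_ne_zero : xv ≠ 0 := algebraMap_mvPolynomial_ne_zero (MvPolynomial.X_ne_zero 0)

theorem zv_ne_zero : zv ≠ 0 := algebraMap_mvPolynomial_ne_zero (MvPolynomial.X_ne_zero 1)

theorem xv_add_zv_ne_zero : xv + zv ≠ 0 := by
  rw [xv, zv, ← map_add]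
  refine algebraMap_mvPolynomial_ne_zero fun h => ?_
  simpa using congrArg (MvPolynomial.eval fun _ => (1 : ℂ)) h

/-- The map `S(x)` on `(g ⊕ ℂ) ⊗ (g ⊕ ℂ)` given by `S(x)(1⊗1)=1⊗1`, `S(x)(1⊗a)=1⊗a`,
`S(x)(a⊗1)=a⊗1`, `S(x)(a⊗b) = a⊗b + x⁻¹(1⊗[a,b] - [a,b]⊗1)` satisfies the unitarity
condition `S₂₁(-x)S(x) = 1` and the quantum Yang–Baxter equation
`S₁₂(x)S₁₃(x+z)S₂₃(z) = S₂₃(z)S₁₃(x+z)S₁₂(x)`. -/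
theorem stmt4 :
    (S21op g (-(xv)) ∘ₗ Sop g xv = LinearMap.id) ∧
    (Sij g (T12 g) xv ∘ₗ Sij g (T13 g) (xv + zv) ∘ₗ Sij g (T23 g) zv =
      Sij g (T23 g) zv ∘ₗ Sij g (T13 g) (xv + zv) ∘ₗ Sij g (T12 g) xv) :=
  ⟨S21op_neg_comp_Sop g xv, Sij_yangBaxter g xv_ne_zero zv_ne_zero xv_add_zv_ne_zero⟩
end
end

section
/- Let V be a vector space with an increasing exhaustive filtration (Eₙ)_{n∈ℤ} such that 1 ∈ E₀ and uₖv ∈ E_{m+n} for all u ∈ Eₘ, v ∈ Eₙ, k ∈ ℤ, where u ↦ Y(u,x) = Σ uₖ x^{−k−1} is a nonlocal vertex algebra structure. Then the graded space gr_E(V) = ⊕ₙ Eₙ/E_{n−1} carries a well-defined nonlocal vertex algebra structure with (u+E_{m−1})ₖ(v+E_{n−1}) = uₖv + E_{m+n−1}, i.e., the product maps are well defined on cosets. -/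
/-- Let `V` carry a nonlocal vertex algebra structure given by mode maps
`Y k : V →ₗ V →ₗ V` (the coefficient of `x^{-k-1}` in `Y(u,x)v`) and vacuum `vac`,
together with an increasing exhaustive filtration `E : ℤ → Submodule ℂ V` with
`vac ∈ E 0` and `uₖ v ∈ E (m+n)` for `u ∈ E m`, `v ∈ E n`.  Then the products are
well defined on the cosets of the associated graded space:
`(u + E (m-1))ₖ (v + E (n-1)) = uₖ v + E (m+n-1)`. -/
theorem stmt5 (V : Type*) [AddCommGroup V] [Module ℂ V]
    (Y : ℤ → V →ₗ[ℂ] V →ₗ[ℂ] V) (vac : V) (E : ℤ → Submodule ℂ V)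
    (hmono : Monotone E) (hexh : (⨆ n, E n) = ⊤) (hvac : vac ∈ E 0)
    (hprod : ∀ (m n k : ℤ) (u v : V), u ∈ E m → v ∈ E n → Y k u v ∈ E (m + n)) :
    ∀ (m n k : ℤ) (u u' v v' : V), u ∈ E m → u' ∈ E m → v ∈ E n → v' ∈ E n →
      u - u' ∈ E (m - 1) → v - v' ∈ E (n - 1) →
      Y k u v - Y k u' v' ∈ E (m + n - 1) := by
  intro m n k u u' v v' hu hu' hv hv' hdu hdv
  have h1 : Y k (u - u') v ∈ E (m - 1 + n) := hprod _ _ _ _ _ hdu hv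
  have h2 : Y k u' (v - v') ∈ E (m + (n - 1)) := hprod _ _ _ _ _ hu' hdv
  have key : Y k u v - Y k u' v' = Y k (u - u') v + Y k u' (v - v') := by
    simp [map_sub, LinearMap.sub_apply]
    try abel
  rw [key]
  have e1 : m - 1 + n = m + n - 1 := by ring
  have e2 : m + (n - 1) = m + n - 1 := by ring
  rw [e1] at h1; rw [e2] at h2
  exact (E (m + n - 1)).add_mem h1 h2
end
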